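/- With the optimal discriminator d*(z) = t(z)/(t(z)+g(z)), the GAN value function satisfies V(d*) = −log 4 + 2·JSD(t ‖ g), where JSD is the Jensen–Shannon divergence. In particular V(d*) ≥ −log 4, with equality if and only if t = g almost everywhere. -/

import Mathlib

/-!
With `m = (t + g) / 2`, the two terms of `V(d*)` are `KL(t ‖ m) - log 2` and `KL(g ‖ m) - log 2`,
because `t / (t + g) = (t / m) / 2` and `1 - t / (t + g) = (g / m) / 2`; this is the identity.
Both divergences are non-negative and `KL(t ‖ m)` vanishes only when `t = m = g` a.e.
(Gibbs' inequality: integrate `p log (p / q) - (p - q) = q · klFun (p / q) ≥ 0`, whose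
integral is `KL(p ‖ q)` when `∫ p = ∫ q`), which gives the bound and its equality case.
-/

open MeasureTheory Real InformationTheory

lemma mul_log_div_sub_sub_eq_mul_klFun (a : ℝ) {b : ℝ} (hb : b ≠ 0) :
    a * log (a / b) - (a - b) = b * klFun (a / b) := by
  rw [klFun]
  field_simp
  ring

lemma sub_le_mul_log_div {a b : ℝ} (ha : 0 ≤ a) (hb : 0 < b) : a - b ≤ a * log (a / b) := by
  have := mul_log_div_sub_sub_eq_mul_klFun a hb.ne'
  nlinarith [klFun_nonneg (div_nonneg ha hb.le)]

lemma mul_log_div_eq_sub_iff {a b : ℝ} (ha : 0 ≤ a) (hb : 0 < b) :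
    a * log (a / b) = a - b ↔ a = b := by
  rw [← sub_eq_zero, mul_log_div_sub_sub_eq_mul_klFun a hb.ne', mul_eq_zero,
    klFun_eq_zero_iff (div_nonneg ha hb.le), div_eq_one_iff_eq hb.ne']
  simp [hb.ne']

lemma mul_log_div_half (a : ℝ) {s : ℝ} (hs : s ≠ 0) :
    a * log (a / (s / 2)) = a * log (a / s) + a * log 2 := by
  rcases eq_or_ne a 0 with rfl | ha
  · simp
  rw [show a / (s / 2) = 2 * (a / s) by field_simp, log_mul two_ne_zero (div_ne_zero ha hs)]
  ring

section Gibbs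

variable {Z : Type*} [MeasurableSpace Z] {μ : Measure Z} {p q : Z → ℝ}

lemma integral_mul_log_div_eq_integral_sub (hp : Integrable p μ) (hq : Integrable q μ)
    (hpq : ∫ z, p z ∂μ = ∫ z, q z ∂μ) (hpl : Integrable (fun z => p z * log (p z / q z)) μ) :
    ∫ z, p z * log (p z / q z) ∂μ = ∫ z, (p z * log (p z / q z) - (p z - q z)) ∂μ := by
  rw [integral_sub hpl (g := fun z => p z - q z) (hp.sub hq), integral_sub hp hq, hpq,
    sub_self, sub_zero]

theorem integral_mul_log_div_nonneg (hp : Integrable p μ) (hq : Integrable q μ)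
    (hpq : ∫ z, p z ∂μ = ∫ z, q z ∂μ) (hp0 : ∀ᵐ z ∂μ, 0 ≤ p z) (hq0 : ∀ᵐ z ∂μ, 0 < q z)
    (hpl : Integrable (fun z => p z * log (p z / q z)) μ) :
    0 ≤ ∫ z, p z * log (p z / q z) ∂μ := by
  rw [integral_mul_log_div_eq_integral_sub hp hq hpq hpl]
  refine integral_nonneg_of_ae ?_
  filter_upwards [hp0, hq0] with z hpz hqz
  exact sub_nonneg.mpr (sub_le_mul_log_div hpz hqz)

theorem integral_mul_log_div_eq_zero_iff (hp : Integrable p μ) (hq : Integrable q μ)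
    (hpq : ∫ z, p z ∂μ = ∫ z, q z ∂μ) (hp0 : ∀ᵐ z ∂μ, 0 ≤ p z) (hq0 : ∀ᵐ z ∂μ, 0 < q z)
    (hpl : Integrable (fun z => p z * log (p z / q z)) μ) :
    ∫ z, p z * log (p z / q z) ∂μ = 0 ↔ p =ᵐ[μ] q := by
  have hres0 : 0 ≤ᵐ[μ] fun z => p z * log (p z / q z) - (p z - q z) := by
    filter_upwards [hp0, hq0] with z hpz hqz
    exact sub_nonneg.mpr (sub_le_mul_log_div hpz hqz)
  rw [integral_mul_log_div_eq_integral_sub hp hq hpq hpl,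
    integral_eq_zero_iff_of_nonneg_ae hres0 (hpl.sub (hp.sub hq))]
  refine Filter.eventually_congr ?_
  filter_upwards [hp0, hq0] with z hpz hqz
  rw [Pi.zero_apply, sub_eq_zero, mul_log_div_eq_sub_iff hpz hqz]

lemma integral_mul_log_div_eq_sub_log_two {s : Z → ℝ} (hp : Integrable p μ)
    (hp1 : ∫ z, p z ∂μ = 1) (hs : ∀ᵐ z ∂μ, s z ≠ 0)
    (hpl : Integrable (fun z => p z * log (p z / (s z / 2))) μ) :
    ∫ z, p z * log (p z / s z) ∂μ = ∫ z, p z * log (p z / (s z / 2)) ∂μ - log 2 := by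
  have hpoint : ∀ᵐ z ∂μ, p z * log (p z / s z) = p z * log (p z / (s z / 2)) - p z * log 2 := by
    filter_upwards [hs] with z hsz
    rw [mul_log_div_half _ hsz]
    ring
  rw [integral_congr_ae hpoint, integral_sub hpl (hp.mul_const _), integral_mul_const, hp1,
    one_mul]

end Gibbs

theorem gan_value_at_optimal_discriminator_general {Z : Type*} [MeasurableSpace Z] (μ : Measure Z)
    (t g : Z → ℝ)
    (htnn : ∀ z, 0 ≤ t z) (hgnn : ∀ z, 0 ≤ g z)
    (htint : ∫ z, t z ∂μ = 1) (hgint : ∫ z, g z ∂μ = 1)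
    (hpos : ∀ᵐ z ∂μ, 0 < t z + g z)
    (hkl1 : Integrable (fun z => t z * log (t z / ((t z + g z) / 2))) μ)
    (hkl2 : Integrable (fun z => g z * log (g z / ((t z + g z) / 2))) μ) :
    ((∫ z, t z * log (t z / (t z + g z)) ∂μ) +
        (∫ z, g z * log (1 - t z / (t z + g z)) ∂μ) =
      -log 4 + 2 * ((1 / 2) * (∫ z, t z * log (t z / ((t z + g z) / 2)) ∂μ) +
          (1 / 2) * (∫ z, g z * log (g z / ((t z + g z) / 2)) ∂μ))) ∧
    (-log 4 ≤ (∫ z, t z * log (t z / (t z + g z)) ∂μ) +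
        (∫ z, g z * log (1 - t z / (t z + g z)) ∂μ)) ∧
    ((∫ z, t z * log (t z / (t z + g z)) ∂μ) +
        (∫ z, g z * log (1 - t z / (t z + g z)) ∂μ) = -log 4 ↔ t =ᵐ[μ] g) := by
  have hti : Integrable t μ := .of_integral_ne_zero (by simp [htint])
  have hgi : Integrable g μ := .of_integral_ne_zero (by simp [hgint])
  have hmi : Integrable (fun z => (t z + g z) / 2) μ := (hti.add hgi).div_const 2
  have hm_pos : ∀ᵐ z ∂μ, 0 < (t z + g z) / 2 := by filter_upwards [hpos] with z hz; positivity
  have htm : ∫ z, t z ∂μ = ∫ z, (t z + g z) / 2 ∂μ := by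
    rw [integral_div, integral_add hti hgi, htint, hgint]; norm_num
  have hgm : ∫ z, g z ∂μ = ∫ z, (t z + g z) / 2 ∂μ := hgint.trans (htint ▸ htm)
  have hs : ∀ᵐ z ∂μ, t z + g z ≠ 0 := hpos.mono fun z hz => hz.ne'
  have hV_t := integral_mul_log_div_eq_sub_log_two hti htint hs hkl1
  have hV_g : ∫ z, g z * log (1 - t z / (t z + g z)) ∂μ =
      ∫ z, g z * log (g z / ((t z + g z) / 2)) ∂μ - log 2 := by
    rw [← integral_mul_log_div_eq_sub_log_two hgi hgint hs hkl2]
    refine integral_congr_ae (hs.mono fun z hz => ?_)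
    dsimp only
    rw [one_sub_div hz, add_sub_cancel_left]
  have hK_t := integral_mul_log_div_nonneg hti hmi htm (.of_forall htnn) hm_pos hkl1
  have hK_g := integral_mul_log_div_nonneg hgi hmi hgm (.of_forall hgnn) hm_pos hkl2
  have hlog4 : log 4 = 2 * log 2 := by
    rw [show (4 : ℝ) = 2 ^ 2 by norm_num, log_pow, Nat.cast_ofNat]
  rw [hV_t, hV_g, hlog4]
  refine ⟨by ring, by linarith, ?_⟩
  rw [show ∀ a b : ℝ, a - log 2 + (b - log 2) = -(2 * log 2) ↔ a + b = 0 from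
      fun a b => by constructor <;> intro h <;> linarith,
    add_eq_zero_iff_of_nonneg hK_t hK_g,
    integral_mul_log_div_eq_zero_iff hti hmi htm (.of_forall htnn) hm_pos hkl1,
    integral_mul_log_div_eq_zero_iff hgi hmi hgm (.of_forall hgnn) hm_pos hkl2]
  refine ⟨fun h => h.1.mono fun z hz => by linarith, fun h => ⟨?_, ?_⟩⟩ <;>
    filter_upwards [h] with z hz <;> linarith

/-- With the optimal discriminator `d*(z) = t/(t+g)`, the GAN value function equals
`-log 4 + 2 JSD(t‖g)`; in particular it is `≥ -log 4` with equality iff `t = g` a.e. -/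
theorem gan_value_at_optimal_discriminator {Z : Type*} [MeasurableSpace Z] (μ : Measure Z)
    (t g : Z → ℝ)
    (ht : Measurable t) (hg : Measurable g)
    (htnn : ∀ z, 0 ≤ t z) (hgnn : ∀ z, 0 ≤ g z)
    (htint : ∫ z, t z ∂μ = 1) (hgint : ∫ z, g z ∂μ = 1)
    (hpos : ∀ᵐ z ∂μ, 0 < t z + g z)
    (hint1 : Integrable (fun z => t z * log (t z / (t z + g z))) μ)
    (hint2 : Integrable (fun z => g z * log (1 - t z / (t z + g z))) μ)
    (hkl1 : Integrable (fun z => t z * log (t z / ((t z + g z) / 2))) μ)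
    (hkl2 : Integrable (fun z => g z * log (g z / ((t z + g z) / 2))) μ) :
    ((∫ z, t z * log (t z / (t z + g z)) ∂μ) +
        (∫ z, g z * log (1 - t z / (t z + g z)) ∂μ) =
      -log 4 + 2 * ((1 / 2) * (∫ z, t z * log (t z / ((t z + g z) / 2)) ∂μ) +
          (1 / 2) * (∫ z, g z * log (g z / ((t z + g z) / 2)) ∂μ))) ∧
    (-log 4 ≤ (∫ z, t z * log (t z / (t z + g z)) ∂μ) +
        (∫ z, g z * log (1 - t z / (t z + g z)) ∂μ)) ∧
    ((∫ z, t z * log (t z / (t z + g z)) ∂μ) +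
        (∫ z, g z * log (1 - t z / (t z + g z)) ∂μ) = -log 4 ↔ t =ᵐ[μ] g) :=
  gan_value_at_optimal_discriminator_general μ t g htnn hgnn htint hgint hpos hkl1 hkl2
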